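/- arXiv:2504.03134 — 7 statements merged into one kernel-verified Lean document; each statement's English description precedes it below -/
import Mathlib

section
/- Let 0 < δ ≤ 1/4, let g be an invertible real n×n matrix, let p be a complex n×n matrix with ‖p − I‖ < δ in operator norm, set h = g·p and B = h·hᵀ. Then B is a complex symmetric matrix and, writing B = B₀ + iB₁ with B₀ = Re B and B₁ = Im B (entrywise real and imaginary parts), both matrices 3δ·B₀ − B₁ and 3δ·B₀ + B₁ are positive definite; equivalently, for every nonzero x ∈ ℝ^n one has Re⟨Bx,x⟩ > 0 and |Im⟨Bx,x⟩| ≤ 3δ·Re⟨Bx,x⟩. -/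
/-!
For real `x ≠ 0` put `y = gᵀx ≠ 0` and `z = pᵀy`; then `⟨Bx, x⟩ = ⟨hᵀx, hᵀx⟩ = ⟨z, z⟩` and
`‖z - y‖ ≤ ‖p - 1‖ ‖y‖ < δ‖y‖`. Writing `z = a + i b` with `a, b` real,
`⟨z, z⟩ = ‖a‖² - ‖b‖² + 2i⟨a, b⟩`, where `‖a - y‖` and `‖b‖` are both `< δ‖y‖`. Hence
`‖a‖ > (1 - δ)‖y‖` and `‖b‖ < δ‖y‖`, and for `δ ≤ 1/4` this forces `2‖a‖‖b‖ < 3δ(‖a‖² - ‖b‖²)`.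
-/

open scoped Matrix.Norms.L2Operator Matrix

/-- The entrywise real part of a complex matrix. -/
def matRe {n : ℕ} (B : Matrix (Fin n) (Fin n) ℂ) : Matrix (Fin n) (Fin n) ℝ :=
  B.map Complex.re

/-- The entrywise imaginary part of a complex matrix. -/
def matIm {n : ℕ} (B : Matrix (Fin n) (Fin n) ℂ) : Matrix (Fin n) (Fin n) ℝ :=
  B.map Complex.im

open Matrix

theorem two_mul_mul_lt_three_mul_sq_sub_sq {δ A C Y : ℝ} (hδ0 : 0 < δ) (hδ1 : δ ≤ 1 / 4)
    (hC0 : 0 ≤ C) (hC : C < δ * Y) (hA : (1 - δ) * Y < A) :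
    2 * (A * C) < 3 * δ * (A ^ 2 - C ^ 2) := by
  have hY : 0 < Y := pos_of_mul_pos_right (hC0.trans_lt hC) hδ0.le
  have hfac₁ : 0 < δ * A - (1 - δ) * C := by nlinarith
  have hfac₂ : 0 < 3 * δ * A + (1 - 3 * δ) * C := by nlinarith
  -- `δ (3δ(A² - C²) - 2AC) = (δA - (1 - δ)C)(3δA + (1 - 3δ)C) + (1 - 4δ)C²`
  have hscaled : 0 < δ * (3 * δ * (A ^ 2 - C ^ 2) - 2 * (A * C)) := by
    nlinarith [mul_pos hfac₁ hfac₂, mul_nonneg (show (0 : ℝ) ≤ 1 - 4 * δ by linarith) (sq_nonneg C)]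
  nlinarith [pos_of_mul_pos_right hscaled hδ0.le]

theorem two_mul_abs_real_inner_lt {E : Type*} [NormedAddCommGroup E] [InnerProductSpace ℝ E]
    {δ : ℝ} {a b y : E} (hδ0 : 0 < δ) (hδ1 : δ ≤ 1 / 4)
    (ha : ‖a - y‖ < δ * ‖y‖) (hb : ‖b‖ < δ * ‖y‖) :
    2 * |inner ℝ a b| < 3 * δ * (‖a‖ ^ 2 - ‖b‖ ^ 2) := by
  have hA : (1 - δ) * ‖y‖ < ‖a‖ := by
    linarith [norm_sub_norm_le y a, norm_sub_rev y a]
  calc 2 * |inner ℝ a b| ≤ 2 * (‖a‖ * ‖b‖) := by gcongr; exact abs_real_inner_le_norm a b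
    _ < 3 * δ * (‖a‖ ^ 2 - ‖b‖ ^ 2) :=
      two_mul_mul_lt_three_mul_sq_sub_sq hδ0 hδ1 (norm_nonneg b) hb hA

section ComplexVector

variable {ι : Type*} [Fintype ι]

def vecRe (z : ι → ℂ) : EuclideanSpace ℝ ι := WithLp.toLp 2 fun i => (z i).re

def vecIm (z : ι → ℂ) : EuclideanSpace ℝ ι := WithLp.toLp 2 fun i => (z i).im

theorem norm_sq_eq_norm_vecRe_sq_add_norm_vecIm_sq (z : ι → ℂ) :
    ‖WithLp.toLp 2 z‖ ^ 2 = ‖vecRe z‖ ^ 2 + ‖vecIm z‖ ^ 2 := by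
  rw [EuclideanSpace.norm_sq_eq, EuclideanSpace.real_norm_sq_eq, EuclideanSpace.real_norm_sq_eq,
    ← Finset.sum_add_distrib]
  refine Finset.sum_congr rfl fun i _ => ?_
  simp [vecRe, vecIm, Complex.sq_norm, Complex.normSq_apply, ← sq]

theorem norm_vecRe_le (z : ι → ℂ) : ‖vecRe z‖ ≤ ‖WithLp.toLp 2 z‖ :=
  le_of_pow_le_pow_left₀ two_ne_zero (norm_nonneg _) <| by
    rw [norm_sq_eq_norm_vecRe_sq_add_norm_vecIm_sq]; linarith [sq_nonneg ‖vecIm z‖]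

theorem norm_vecIm_le (z : ι → ℂ) : ‖vecIm z‖ ≤ ‖WithLp.toLp 2 z‖ :=
  le_of_pow_le_pow_left₀ two_ne_zero (norm_nonneg _) <| by
    rw [norm_sq_eq_norm_vecRe_sq_add_norm_vecIm_sq]; linarith [sq_nonneg ‖vecRe z‖]

theorem re_dotProduct_self (z : ι → ℂ) : (z ⬝ᵥ z).re = ‖vecRe z‖ ^ 2 - ‖vecIm z‖ ^ 2 := by
  rw [EuclideanSpace.real_norm_sq_eq, EuclideanSpace.real_norm_sq_eq]
  simp [vecRe, vecIm, dotProduct, Complex.re_sum, sq]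

theorem im_dotProduct_self (z : ι → ℂ) : (z ⬝ᵥ z).im = 2 * inner ℝ (vecRe z) (vecIm z) := by
  simp only [vecRe, vecIm, dotProduct, Complex.im_sum, Complex.mul_im, PiLp.inner_apply,
    Finset.mul_sum]
  refine Finset.sum_congr rfl fun i _ => ?_
  simp only [RCLike.inner_apply, conj_trivial]
  ring

theorem abs_im_dotProduct_self_lt {δ : ℝ} {z : ι → ℂ} {y : ι → ℝ} (hδ0 : 0 < δ) (hδ1 : δ ≤ 1 / 4)
    (hzy : ‖WithLp.toLp 2 (z - fun i => (y i : ℂ))‖ < δ * ‖WithLp.toLp 2 fun i => (y i : ℂ)‖) :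
    |(z ⬝ᵥ z).im| < 3 * δ * (z ⬝ᵥ z).re := by
  have hre : vecRe (z - fun i => (y i : ℂ)) = vecRe z - WithLp.toLp 2 y := by
    ext i; simp [vecRe]
  have him : vecIm (z - fun i => (y i : ℂ)) = vecIm z := by
    ext i; simp [vecIm]
  have hy : ‖WithLp.toLp 2 fun i => (y i : ℂ)‖ = ‖WithLp.toLp 2 y‖ := by
    simp [EuclideanSpace.norm_eq]
  rw [hy] at hzy
  rw [re_dotProduct_self, im_dotProduct_self, abs_mul, abs_two]
  exact two_mul_abs_real_inner_lt hδ0 hδ1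
    ((hre ▸ norm_vecRe_le _).trans_lt hzy) ((him ▸ norm_vecIm_le _).trans_lt hzy)

end ComplexVector

section L2OpNorm

variable {𝕜 m n : Type*} [RCLike 𝕜] [Fintype m] [Fintype n] [DecidableEq m] [DecidableEq n]

theorem Matrix.l2_opNorm_transpose_le (A : Matrix m n 𝕜) : ‖Aᵀ‖ ≤ ‖A‖ := by
  rw [l2_opNorm_def Aᵀ]
  refine ContinuousLinearMap.opNorm_le_bound _ (norm_nonneg _) fun x => ?_
  have hstar : Aᵀ *ᵥ x.ofLp = star (Aᴴ *ᵥ star x.ofLp) := by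
    rw [star_mulVec, star_star, conjTranspose_conjTranspose, mulVec_transpose]
  have hbound := l2_opNorm_mulVec Aᴴ (WithLp.toLp 2 (star x.ofLp))
  rw [l2_opNorm_conjTranspose] at hbound
  simpa [hstar, EuclideanSpace.norm_eq] using hbound

theorem Matrix.l2_opNorm_transpose (A : Matrix m n 𝕜) : ‖Aᵀ‖ = ‖A‖ :=
  le_antisymm A.l2_opNorm_transpose_le (by simpa using Aᵀ.l2_opNorm_transpose_le)

end L2OpNorm

theorem abs_im_mulVec_dotProduct_self_lt {ι : Type*} [Fintype ι] [DecidableEq ι] {δ : ℝ}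
    (hδ0 : 0 < δ) (hδ1 : δ ≤ 1 / 4) {q : Matrix ι ι ℂ} (hq : ‖q - 1‖ < δ) {y : ι → ℝ}
    (hy : y ≠ 0) :
    |((q *ᵥ fun i => (y i : ℂ)) ⬝ᵥ (q *ᵥ fun i => (y i : ℂ))).im| <
      3 * δ * ((q *ᵥ fun i => (y i : ℂ)) ⬝ᵥ (q *ᵥ fun i => (y i : ℂ))).re := by
  set v : EuclideanSpace ℂ ι := WithLp.toLp 2 fun i => (y i : ℂ)
  have hv : 0 < ‖v‖ := by
    refine norm_pos_iff.2 fun h0 => hy (funext fun i => ?_)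
    simpa [v] using congr_arg (fun w : EuclideanSpace ℂ ι => w i) h0
  refine abs_im_dotProduct_self_lt (y := y) hδ0 hδ1 ?_
  calc ‖WithLp.toLp 2 ((q *ᵥ v.ofLp) - v.ofLp)‖ = ‖WithLp.toLp 2 ((q - 1) *ᵥ v.ofLp)‖ := by
        rw [sub_mulVec, one_mulVec]
    _ ≤ ‖q - 1‖ * ‖v‖ := l2_opNorm_mulVec _ _
    _ < δ * ‖v‖ := by gcongr

theorem mul_transpose_mulVec_dotProduct {R m n : Type*} [CommSemiring R] [Fintype m] [Fintype n]
    (h : Matrix m n R) (v : m → R) : (h * hᵀ) *ᵥ v ⬝ᵥ v = (hᵀ *ᵥ v) ⬝ᵥ (hᵀ *ᵥ v) := by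
  rw [← mulVec_mulVec, dotProduct_comm, dotProduct_mulVec, ← mulVec_transpose, dotProduct_comm]

theorem transpose_map_ofReal_mul_mulVec {m : Type*} [Fintype m] (g : Matrix m m ℝ)
    (p : Matrix m m ℂ) (x : m → ℝ) :
    (g.map Complex.ofReal * p)ᵀ *ᵥ (fun j => (x j : ℂ)) = pᵀ *ᵥ fun j => ((gᵀ *ᵥ x) j : ℂ) := by
  rw [transpose_mul, ← mulVec_mulVec, ← transpose_map]
  congr 1
  funext j
  exact (RingHom.map_mulVec Complex.ofRealHom gᵀ x j).symm

theorem re_mulVec_dotProduct_ofReal {n : ℕ} (B : Matrix (Fin n) (Fin n) ℂ) (x : Fin n → ℝ) :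
    (B *ᵥ (fun j => (x j : ℂ)) ⬝ᵥ fun j => (x j : ℂ)).re = x ⬝ᵥ (matRe B *ᵥ x) := by
  simp only [mulVec, dotProduct, Complex.re_sum, Complex.mul_re, matRe, map_apply,
    Finset.sum_mul, Finset.mul_sum, Complex.ofReal_re, Complex.ofReal_im, mul_zero, sub_zero]
  exact Finset.sum_congr rfl fun i _ => Finset.sum_congr rfl fun j _ => by ring

theorem im_mulVec_dotProduct_ofReal {n : ℕ} (B : Matrix (Fin n) (Fin n) ℂ) (x : Fin n → ℝ) :
    (B *ᵥ (fun j => (x j : ℂ)) ⬝ᵥ fun j => (x j : ℂ)).im = x ⬝ᵥ (matIm B *ᵥ x) := by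
  simp only [mulVec, dotProduct, Complex.im_sum, Complex.mul_im, matIm, map_apply,
    Finset.sum_mul, Finset.mul_sum, Complex.ofReal_re, Complex.ofReal_im, mul_zero]
  exact Finset.sum_congr rfl fun i _ => Finset.sum_congr rfl fun j _ => by ring

theorem Matrix.posDef_sub_and_posDef_add_of_abs_lt {ι : Type*} [Fintype ι]
    {M N : Matrix ι ι ℝ} (hM : M.IsSymm) (hN : N.IsSymm)
    (h : ∀ x ≠ 0, |x ⬝ᵥ (N *ᵥ x)| < x ⬝ᵥ (M *ᵥ x)) : (M - N).PosDef ∧ (M + N).PosDef := by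
  refine ⟨posDef_iff_dotProduct_mulVec.2 ⟨?_, fun x hx => ?_⟩,
    posDef_iff_dotProduct_mulVec.2 ⟨?_, fun x hx => ?_⟩⟩
  · exact isHermitian_iff_isSymm.2 (hM.sub hN)
  · rw [star_trivial, sub_mulVec, dotProduct_sub]
    linarith [le_abs_self (x ⬝ᵥ (N *ᵥ x)), h x hx]
  · exact isHermitian_iff_isSymm.2 (hM.add hN)
  · rw [star_trivial, add_mulVec, dotProduct_add]
    linarith [neg_abs_le (x ⬝ᵥ (N *ᵥ x)), h x hx]

/-- Let `0 < δ ≤ 1/4`, let `g` be an invertible real `n×n` matrix, let `p` be a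
complex matrix with `‖p − I‖ < δ` in operator norm, set `h = g·p` and `B = h·hᵀ`.  Then `B` is
symmetric, the real matrices `3δ·Re B − Im B` and `3δ·Re B + Im B` are positive definite, and
equivalently for every nonzero real `x`: `Re⟨Bx,x⟩ > 0` and `|Im⟨Bx,x⟩| ≤ 3δ·Re⟨Bx,x⟩`. -/
theorem stmt_7 {n : ℕ} (δ : ℝ) (hδ0 : 0 < δ) (hδ1 : δ ≤ 1 / 4)
    (g : Matrix (Fin n) (Fin n) ℝ) (hg : IsUnit g)
    (p : Matrix (Fin n) (Fin n) ℂ) (hp : ‖p - 1‖ < δ)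
    (h B : Matrix (Fin n) (Fin n) ℂ) (hh : h = g.map Complex.ofReal * p) (hB : B = h * hᵀ) :
    Bᵀ = B ∧
    ((3 * δ) • matRe B - matIm B).PosDef ∧ ((3 * δ) • matRe B + matIm B).PosDef ∧
    ∀ x : Fin n → ℝ, x ≠ 0 →
      0 < (B.mulVec (fun j => (x j : ℂ)) ⬝ᵥ fun j => (x j : ℂ)).re ∧
      |(B.mulVec (fun j => (x j : ℂ)) ⬝ᵥ fun j => (x j : ℂ)).im| ≤
        3 * δ * (B.mulVec (fun j => (x j : ℂ)) ⬝ᵥ fun j => (x j : ℂ)).re := by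
  have hBsymm : B.IsSymm := by rw [hB]; exact isSymm_mul_transpose_self h
  have key : ∀ x : Fin n → ℝ, x ≠ 0 →
      |(B *ᵥ (fun j => (x j : ℂ)) ⬝ᵥ fun j => (x j : ℂ)).im| <
        3 * δ * (B *ᵥ (fun j => (x j : ℂ)) ⬝ᵥ fun j => (x j : ℂ)).re := by
    intro x hx
    have hgx : gᵀ *ᵥ x ≠ 0 := fun h0 =>
      hx (mulVec_injective_iff_isUnit.2 ((isUnit_transpose g).2 hg) (h0.trans (mulVec_zero _).symm))
    rw [hB, mul_transpose_mulVec_dotProduct, hh, transpose_map_ofReal_mul_mulVec]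
    refine abs_im_mulVec_dotProduct_self_lt hδ0 hδ1 ?_ hgx
    rwa [← transpose_one, ← transpose_sub, l2_opNorm_transpose]
  have hform : ∀ x ≠ 0, |x ⬝ᵥ (matIm B *ᵥ x)| < x ⬝ᵥ (((3 * δ) • matRe B) *ᵥ x) := by
    intro x hx
    rw [smul_mulVec, dotProduct_smul, smul_eq_mul, ← re_mulVec_dotProduct_ofReal,
      ← im_mulVec_dotProduct_ofReal]
    exact key x hx
  obtain ⟨hsub, hadd⟩ :=
    posDef_sub_and_posDef_add_of_abs_lt (M := (3 * δ) • matRe B) (N := matIm B)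
      ((hBsymm.map _).smul _) (hBsymm.map _) hform
  exact ⟨hBsymm, hsub, hadd, fun x hx =>
    ⟨pos_of_mul_pos_right ((abs_nonneg _).trans_lt (key x hx)) (by positivity), (key x hx).le⟩⟩
end

section
/- Let n ≥ 1 and δ > 0 with 2nδ < 1. Let B = B₀ + iB₁ be a complex n×n matrix with B₀ and B₁ real symmetric, and suppose both δB₀ − B₁ and δB₀ + B₁ are positive definite. Then every eigenvalue λ ∈ ℂ of B (i.e. every λ with det(B − λI) = 0) satisfies Re λ > 0 and |Im λ| ≤ (2nδ/√(1 − 4n²δ²))·Re λ. -/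
/-! For an eigenvector `v`, the forms `p = v* (δB₀ − B₁) v` and `q = v* (δB₀ + B₁) v` are positive
reals, and `2δ λ |v|² = (p + q) + iδ(q − p)`. Hence `Re λ > 0` and `|Im λ| < δ Re λ`, and
`δ ≤ 2nδ ≤ 2nδ / √(1 − 4n²δ²)`. -/

open Complex
open scoped Matrix ComplexOrder

namespace Matrix

variable {ι : Type*} [Fintype ι]

lemma map_ofReal_mulVec (M : Matrix ι ι ℝ) (x : ι → ℝ) :
    M.map ofReal *ᵥ (ofReal ∘ x) = ofReal ∘ (M *ᵥ x) :=
  funext fun i ↦ (RingHom.map_mulVec ofRealHom M x i).symm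

lemma star_dotProduct_map_ofReal_mulVec {M : Matrix ι ι ℝ} (hM : M.IsSymm) (v : ι → ℂ) :
    star v ⬝ᵥ (M.map ofReal *ᵥ v) =
      ((fun i ↦ (v i).re) ⬝ᵥ M *ᵥ (fun i ↦ (v i).re) +
        (fun i ↦ (v i).im) ⬝ᵥ M *ᵥ (fun i ↦ (v i).im) : ℝ) := by
  set x : ι → ℝ := fun i ↦ (v i).re
  set y : ι → ℝ := fun i ↦ (v i).im
  have hv : v = ofReal ∘ x + I • ofReal ∘ y := funext fun i ↦ by
    apply Complex.ext <;> simp [x, y]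
  have hstar : star v = ofReal ∘ x - I • ofReal ∘ y := funext fun i ↦ by
    apply Complex.ext <;> simp [x, y]
  have hcross : y ⬝ᵥ M *ᵥ x = x ⬝ᵥ M *ᵥ y := by
    rw [dotProduct_mulVec, ← mulVec_transpose, hM.eq, dotProduct_comm]
  have hdot (a b : ι → ℝ) : (ofReal ∘ a) ⬝ᵥ (ofReal ∘ b) = ((a ⬝ᵥ b : ℝ) : ℂ) :=
    (RingHom.map_dotProduct ofRealHom a b).symm
  rw [hstar, hv, mulVec_add, mulVec_smul, map_ofReal_mulVec, map_ofReal_mulVec]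
  simp only [sub_dotProduct, dotProduct_add, smul_dotProduct, dotProduct_smul, hdot, hcross,
    smul_eq_mul]
  push_cast
  linear_combination (-((y ⬝ᵥ M *ᵥ y : ℝ) : ℂ)) * I_sq

lemma PosDef.map_ofReal {M : Matrix ι ι ℝ} (hM : M.PosDef) : (M.map ofReal).PosDef := by
  refine .of_dotProduct_mulVec_pos (hM.isHermitian.map _ fun _ ↦ (conj_ofReal _).symm)
    fun v hv ↦ ?_
  rw [star_dotProduct_map_ofReal_mulVec (isHermitian_iff_isSymm.1 hM.isHermitian), zero_lt_real]
  have hpos {z : ι → ℝ} (hz : z ≠ 0) : 0 < z ⬝ᵥ M *ᵥ z := by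
    simpa using hM.dotProduct_mulVec_pos hz
  have hnonneg (z : ι → ℝ) : 0 ≤ z ⬝ᵥ M *ᵥ z := by
    simpa using hM.posSemidef.dotProduct_mulVec_nonneg z
  by_cases hre : (fun i ↦ (v i).re) = 0
  · have him : (fun i ↦ (v i).im) ≠ 0 := fun him ↦
      hv (funext fun i ↦ Complex.ext (congrFun hre i) (congrFun him i))
    linarith [hnonneg fun i ↦ (v i).re, hpos him]
  · linarith [hpos hre, hnonneg fun i ↦ (v i).im]

theorem re_pos_and_abs_im_lt_of_det_sub_smul_eq_zero [DecidableEq ι] {A C : Matrix ι ι ℂ} {δ : ℝ}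
    (hδ : 0 < δ) (h₁ : ((δ : ℂ) • A - C).PosDef) (h₂ : ((δ : ℂ) • A + C).PosDef) {lam : ℂ}
    (hlam : (A + I • C - lam • 1).det = 0) : 0 < lam.re ∧ |lam.im| < δ * lam.re := by
  obtain ⟨v, hv, hAv⟩ := exists_mulVec_eq_zero_iff.2 hlam
  obtain ⟨hp, hp'⟩ := Complex.pos_iff.1 (h₁.dotProduct_mulVec_pos hv)
  obtain ⟨hq, hq'⟩ := Complex.pos_iff.1 (h₂.dotProduct_mulVec_pos hv)
  obtain ⟨hs, hs'⟩ := Complex.pos_iff.1 (dotProduct_star_self_pos_iff.2 hv)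
  set p := star v ⬝ᵥ (((δ : ℂ) • A - C) *ᵥ v)
  set q := star v ⬝ᵥ (((δ : ℂ) • A + C) *ᵥ v)
  set s := star v ⬝ᵥ v
  have key : 2 * δ * lam * s = p + q + I * δ * (q - p) := by
    have heig : star v ⬝ᵥ (A *ᵥ v) + I * star v ⬝ᵥ (C *ᵥ v) = lam * s := by
      simpa [sub_mulVec, add_mulVec, smul_mulVec, dotProduct_sub, dotProduct_add, sub_eq_zero]
        using congrArg (star v ⬝ᵥ ·) hAv
    simp only [p, q, sub_mulVec, add_mulVec, smul_mulVec, dotProduct_sub, dotProduct_add,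
      dotProduct_smul, smul_eq_mul]
    linear_combination (2 * δ) * heig.symm
  have hre := congrArg re key
  have him := congrArg im key
  simp only [mul_re, mul_im, add_re, add_im, sub_re, sub_im, re_ofNat, im_ofNat, ofReal_re,
    ofReal_im, I_re, I_im, ← hp', ← hq', ← hs', mul_zero, zero_mul, sub_zero, add_zero, zero_add,
    sub_self, one_mul] at hre him
  have hδs : 0 < 2 * δ * s.re := by positivity
  have hlam_re : 0 < lam.re := by nlinarith
  refine ⟨hlam_re, abs_lt.2 ⟨?_, ?_⟩⟩ <;> nlinarith

end Matrix

lemma le_div_sqrt_one_sub_sq {x : ℝ} (hx₀ : 0 ≤ x) (hx₁ : x < 1) : x ≤ x / √(1 - x ^ 2) :=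
  le_div_self hx₀ (Real.sqrt_pos.2 (by nlinarith)) (Real.sqrt_le_one.2 (by nlinarith))

theorem stmt_8_general {n : ℕ} (hn : 1 ≤ n) (δ : ℝ) (hδ0 : 0 < δ) (hδ : 2 * n * δ < 1)
    (B0 B1 : Matrix (Fin n) (Fin n) ℝ)
    (h1 : (δ • B0 - B1).PosDef) (h2 : (δ • B0 + B1).PosDef)
    (lam : ℂ)
    (hlam : (B0.map Complex.ofReal + Complex.I • B1.map Complex.ofReal - lam • 1).det = 0) :
    0 < lam.re ∧
      |lam.im| ≤ (2 * n * δ / Real.sqrt (1 - 4 * n ^ 2 * δ ^ 2)) * lam.re := by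
  obtain ⟨hre, him⟩ := Matrix.re_pos_and_abs_im_lt_of_det_sub_smul_eq_zero hδ0
    (by convert h1.map_ofReal using 1; ext; simp) (by convert h2.map_ofReal using 1; ext; simp) hlam
  refine ⟨hre, him.le.trans (mul_le_mul_of_nonneg_right ?_ hre.le)⟩
  have hn' : (1 : ℝ) ≤ n := by exact_mod_cast hn
  calc δ ≤ 2 * n * δ := by nlinarith
    _ ≤ _ := by convert le_div_sqrt_one_sub_sq (by positivity) hδ using 3; ring

/-- Let `n ≥ 1` and `δ > 0` with `2nδ < 1`.  Let `B = B₀ + iB₁` with `B₀`, `B₁`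
real symmetric, and suppose `δB₀ − B₁` and `δB₀ + B₁` are positive definite.  Then every
eigenvalue `λ` of `B` (i.e. `det (B − λI) = 0`) satisfies `Re λ > 0` and
`|Im λ| ≤ (2nδ/√(1 − 4n²δ²))·Re λ`. -/
theorem stmt_8 {n : ℕ} (hn : 1 ≤ n) (δ : ℝ) (hδ0 : 0 < δ) (hδ : 2 * n * δ < 1)
    (B0 B1 : Matrix (Fin n) (Fin n) ℝ) (hB0 : B0.IsSymm) (hB1 : B1.IsSymm)
    (h1 : (δ • B0 - B1).PosDef) (h2 : (δ • B0 + B1).PosDef)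
    (lam : ℂ)
    (hlam : (B0.map Complex.ofReal + Complex.I • B1.map Complex.ofReal - lam • 1).det = 0) :
    0 < lam.re ∧
      |lam.im| ≤ (2 * n * δ / Real.sqrt (1 - 4 * n ^ 2 * δ ^ 2)) * lam.re :=
  stmt_8_general hn δ hδ0 hδ B0 B1 h1 h2 lam hlam
end

section
/- Let B and S be complex symmetric n×n matrices with S² = B, and suppose Re B is positive definite. Then Re S is an invertible matrix. (Indeed, writing S = S₀ + iS₁ with S₀, S₁ real, one has S₀² = Re B + S₁², which is positive definite.) -/
open scoped Matrix

/-!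
Write `S = S₀ + i S₁` with `S₀, S₁` real. Taking real parts in `S² = B` gives
`S₀² = Re B + S₁²`, and symmetry of `S` makes `S₁² = S₁ᵀ S₁` positive semidefinite, so `S₀²` is
positive definite, hence invertible, and therefore so is `S₀`.
-/

namespace Matrix

theorem map_re_mul {l m n : Type*} [Fintype m] (A : Matrix l m ℂ) (B : Matrix m n ℂ) :
    (A * B).map Complex.re =
      A.map Complex.re * B.map Complex.re - A.map Complex.im * B.map Complex.im := by
  ext i j
  simp [mul_apply, Complex.re_sum, Finset.sum_sub_distrib]

theorem IsSymm.map_re_mul_self {n : Type*} [Fintype n] {S : Matrix n n ℂ} (hS : S.IsSymm) :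
    S.map Complex.re * S.map Complex.re =
      (S * S).map Complex.re + (S.map Complex.im)ᴴ * S.map Complex.im := by
  have him : (S.map Complex.im)ᴴ = S.map Complex.im := by
    rw [conjTranspose_eq_transpose_of_trivial, ← transpose_map, hS.eq]
  rw [map_re_mul, him, sub_add_cancel]

end Matrix

theorem stmt_10_general {n : ℕ} (B S : Matrix (Fin n) (Fin n) ℂ)
    (hS : Sᵀ = S) (hSB : S * S = B) (hRe : (matRe B).PosDef) :
    IsUnit (matRe S) := by
  have hsq : (matRe S * matRe S).PosDef := by
    rw [matRe, Matrix.IsSymm.map_re_mul_self hS, hSB]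
    exact hRe.add_posSemidef (Matrix.posSemidef_conjTranspose_mul_self _)
  exact isUnit_of_mul_isUnit_left hsq.isUnit

/-- Let `B` and `S` be complex symmetric `n×n` matrices with `S² = B`, and
suppose `Re B` is positive definite.  Then `Re S` is an invertible matrix. -/
theorem stmt_10 {n : ℕ} (B S : Matrix (Fin n) (Fin n) ℂ)
    (hB : Bᵀ = B) (hS : Sᵀ = S) (hSB : S * S = B) (hRe : (matRe B).PosDef) :
    IsUnit (matRe S) :=
  stmt_10_general B S hS hSB hRe
end

section
/- Let n ≥ 1 and δ > 0 with 2nδ < 1. Let B = B₀ + iB₁ be a complex symmetric n×n matrix with B₀, B₁ real and with both δB₀ − B₁ and δB₀ + B₁ positive definite. Let S be a complex symmetric n×n matrix with S² = B such that every eigenvalue of S has positive real part. Then Re S is positive definite. -/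
/-!
Write `S = H + iK` with `H = Re S` and `K = Im S`, both real symmetric, and deform `S` along
`S_t = H + itK`, `0 ≤ t ≤ 1`. Adding the two hypotheses shows that `Re B = H² - K²` is positive
definite, so `Re (S_t²) = H² - t²K² = Re B + (1 - t²)K²` is positive definite while `Im (S_t²)`
stays symmetric; hence every eigenvalue `λ` of `S_t` has `Re (λ²) > 0`, and none is purely
imaginary. The spectrum of a matrix varies continuously (it is both upper and lower
hemicontinuous), so it stays in the open right half-plane from `t = 1` down to `t = 0`, where
`S_0 = H` is real symmetric: `H` is positive definite.
-/

open scoped Matrix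

open Filter Topology Polynomial

theorem Polynomial.Monic.exists_mem_roots_dist_lt {K : Type*} [NormedField K] [IsAlgClosed K]
    {p : K[X]} (hp : p.Monic) {z : K} {ε : ℝ} (hε : 0 < ε)
    (h : ‖p.eval z‖ < ε ^ p.natDegree) : ∃ w ∈ p.roots, dist w z < ε := by
  by_contra! hfar
  have hsplit := IsAlgClosed.splits p
  refine h.not_ge ?_
  calc ε ^ p.natDegree = (p.roots.map fun _ => ε).prod := by
        simp [hsplit.natDegree_eq_card_roots]
    _ ≤ (p.roots.map fun w => ‖z - w‖).prod :=
        Multiset.prod_map_le_prod_map₀ _ _ (fun _ _ => hε.le) fun w hw => by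
          simpa [dist_eq_norm'] using hfar w hw
    _ = ‖p.eval z‖ := by
        rw [hsplit.eval_eq_prod_roots_of_monic hp, ← normHom_apply, map_multiset_prod,
          Multiset.map_map]
        rfl

namespace Matrix

theorem PosDef.of_smul_sub_of_smul_add {ι : Type*} {X Y : Matrix ι ι ℝ} {δ : ℝ} (hδ : 0 < δ)
    (h₁ : (δ • X - Y).PosDef) (h₂ : (δ • X + Y).PosDef) : X.PosDef := by
  have := (h₁.add h₂).smul (inv_pos.2 (mul_pos two_pos hδ))
  convert this using 1
  rw [show δ • X - Y + (δ • X + Y) = (2 * δ) • X by module, smul_smul,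
    inv_mul_cancel₀ (by positivity), one_smul]

variable {ι : Type*} [Fintype ι] [DecidableEq ι]

theorem lowerHemicontinuous_spectrum :
    LowerHemicontinuous (spectrum ℂ : Matrix ι ι ℂ → Set ℂ) := by
  refine lowerHemicontinuous_iff.2 fun A₀ => lowerHemicontinuousAt_iff.2 ?_
  rintro u hu ⟨μ, hμA₀, hμu⟩
  obtain ⟨ε, hε, hball⟩ := Metric.isOpen_iff.1 hu μ hμu
  have hcont : Continuous fun A : Matrix ι ι ℂ => ‖A.charpoly.eval μ‖ := by
    simp only [eval_charpoly]
    fun_prop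
  have hsmall : ∀ᶠ A in 𝓝 A₀, ‖A.charpoly.eval μ‖ < ε ^ A.charpoly.natDegree := by
    simp only [charpoly_natDegree_eq_dim]
    refine hcont.continuousAt.eventually_lt continuousAt_const ?_
    rw [mem_spectrum_iff_isRoot_charpoly.1 hμA₀, norm_zero]
    positivity
  filter_upwards [hsmall] with A hA
  obtain ⟨w, hw, hwμ⟩ := (charpoly_monic A).exists_mem_roots_dist_lt hε hA
  exact ⟨w, mem_spectrum_iff_isRoot_charpoly.2 (isRoot_of_mem_roots hw), hball hwμ⟩

theorem upperHemicontinuous_spectrum :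
    UpperHemicontinuous (spectrum ℂ : Matrix ι ι ℂ → Set ℂ) :=
  -- any Banach algebra norm on matrices will do
  let _ := Matrix.linftyOpNormedRing (n := ι) (α := ℂ)
  let _ := Matrix.linftyOpNormedAlgebra (n := ι) (R := ℂ) (α := ℂ)
  _root_.upperHemicontinuous_spectrum ℂ (Matrix ι ι ℂ)

theorem spectrum_subset_re_pos_of_isPreconnected {X : Type*} [TopologicalSpace X]
    {A : X → Matrix ι ι ℂ} (hA : Continuous A) {s : Set X} (hs : IsPreconnected s)
    (him : ∀ x ∈ s, ∀ μ ∈ spectrum ℂ (A x), μ.re ≠ 0) {x₀ : X} (hx₀ : x₀ ∈ s)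
    (h₀ : spectrum ℂ (A x₀) ⊆ {μ | 0 < μ.re}) {x : X} (hx : x ∈ s) :
    spectrum ℂ (A x) ⊆ {μ | 0 < μ.re} := by
  have hu : IsOpen {x | spectrum ℂ (A x) ⊆ {μ | 0 < μ.re}} :=
    upperHemicontinuous_iff_isOpen_preimage_Iic.1 (upperHemicontinuous_spectrum.comp hA) _
      (isOpen_lt continuous_const Complex.continuous_re)
  have hv : IsOpen {x | (spectrum ℂ (A x) ∩ {μ | μ.re < 0}).Nonempty} :=
    lowerHemicontinuous_iff_isOpen_inter_nonempty.1 (lowerHemicontinuous_spectrum.comp hA) _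
      (isOpen_lt Complex.continuous_re continuous_const)
  have hdisj : Disjoint {x | spectrum ℂ (A x) ⊆ {μ | 0 < μ.re}}
      {x | (spectrum ℂ (A x) ∩ {μ | μ.re < 0}).Nonempty} :=
    Set.disjoint_left.2 fun x hpos ⟨μ, hμ, hneg⟩ =>
      lt_asymm (show μ.re < 0 from hneg) (hpos hμ)
  refine hs.subset_left_of_subset_union hu hv hdisj (fun x hx => ?_) ⟨x₀, hx₀, h₀⟩ hx
  by_cases hpos : spectrum ℂ (A x) ⊆ {μ | 0 < μ.re}
  · exact Or.inl hpos
  · obtain ⟨μ, hμ, hμre⟩ := Set.not_subset.1 hpos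
    exact Or.inr ⟨μ, hμ, (him x hx μ hμ).lt_of_le (not_lt.1 hμre)⟩

theorem mem_spectrum_iff_det_sub_smul_one_eq_zero {K : Type*} [Field K] {A : Matrix ι ι K}
    {μ : K} : μ ∈ spectrum K A ↔ (A - μ • 1).det = 0 := by
  rw [mem_spectrum_iff_isRoot_charpoly, IsRoot.def, eval_charpoly, ← neg_sub, det_neg,
    scalar_apply, ← smul_one_eq_diagonal]
  simp

theorem IsHermitian.posDef_of_spectrum_map_ofReal_subset {H : Matrix ι ι ℝ} (hH : H.IsHermitian)
    (h : spectrum ℂ (H.map Complex.ofReal) ⊆ {μ | 0 < μ.re}) : H.PosDef := by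
  refine hH.posDef_iff_eigenvalues_pos.2 fun i => ?_
  have hmem : (hH.eigenvalues i : ℂ) ∈ spectrum ℂ (H.map Complex.ofRealHom) := by
    rw [mem_spectrum_iff_isRoot_charpoly, charpoly_map]
    exact (mem_spectrum_iff_isRoot_charpoly.1 (hH.eigenvalues_mem_spectrum_real i)).map
  simpa using h hmem

end Matrix

section RealImaginaryParts

open Matrix

variable {n : ℕ}

def ofReIm (X Y : Matrix (Fin n) (Fin n) ℝ) : Matrix (Fin n) (Fin n) ℂ :=
  of fun i j => ⟨X i j, Y i j⟩

@[simp] theorem matRe_ofReIm (X Y : Matrix (Fin n) (Fin n) ℝ) : matRe (ofReIm X Y) = X := rfl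

@[simp] theorem matIm_ofReIm (X Y : Matrix (Fin n) (Fin n) ℝ) : matIm (ofReIm X Y) = Y := rfl

@[simp] theorem ofReIm_matRe_matIm (S : Matrix (Fin n) (Fin n) ℂ) :
    ofReIm (matRe S) (matIm S) = S := rfl

theorem ofReIm_zero_right (X : Matrix (Fin n) (Fin n) ℝ) : ofReIm X 0 = X.map Complex.ofReal := by
  ext i j
  exact Complex.ext rfl rfl

theorem continuous_ofReIm_smul (X Y : Matrix (Fin n) (Fin n) ℝ) :
    Continuous fun t : ℝ => ofReIm X (t • Y) := by
  refine continuous_pi fun i => continuous_pi fun j => ?_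
  simp only [ofReIm, of_apply, Matrix.smul_apply, smul_eq_mul, Complex.mk_eq_add_mul_I]
  fun_prop

theorem matRe_transpose (S : Matrix (Fin n) (Fin n) ℂ) : matRe Sᵀ = (matRe S)ᵀ := rfl

theorem matIm_transpose (S : Matrix (Fin n) (Fin n) ℂ) : matIm Sᵀ = (matIm S)ᵀ := rfl

theorem matRe_mul (M N : Matrix (Fin n) (Fin n) ℂ) :
    matRe (M * N) = matRe M * matRe N - matIm M * matIm N := by
  ext i j
  simp only [matRe, matIm, map_apply, Matrix.sub_apply, mul_apply, Complex.re_sum,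
    Complex.mul_re, Finset.sum_sub_distrib]

theorem matIm_mul (M N : Matrix (Fin n) (Fin n) ℂ) :
    matIm (M * N) = matRe M * matIm N + matIm M * matRe N := by
  ext i j
  simp only [matRe, matIm, map_apply, Matrix.add_apply, mul_apply, Complex.im_sum,
    Complex.mul_im, Finset.sum_add_distrib]

theorem re_pos_of_mem_spectrum_of_posDef_matRe {M : Matrix (Fin n) (Fin n) ℂ}
    (hRe : (matRe M).PosDef) (hIm : (matIm M)ᵀ = matIm M) {μ : ℂ} (hμ : μ ∈ spectrum ℂ M) :
    0 < μ.re := by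
  obtain ⟨z, hz, hMz⟩ :=
    exists_mulVec_eq_zero_iff.2 (mem_spectrum_iff_det_sub_smul_one_eq_zero.1 hμ)
  rw [sub_mulVec, smul_mulVec, one_mulVec, sub_eq_zero] at hMz
  set u : Fin n → ℝ := fun i => (z i).re
  set v : Fin n → ℝ := fun i => (z i).im
  have hre : matRe M *ᵥ u - matIm M *ᵥ v = μ.re • u - μ.im • v := by
    funext i
    simpa [mulVec, dotProduct, matRe, matIm, Complex.re_sum, u, v] using
      congrArg (fun w => (w i).re) hMz
  have him : matRe M *ᵥ v + matIm M *ᵥ u = μ.re • v + μ.im • u := by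
    funext i
    simpa [mulVec, dotProduct, matRe, matIm, Complex.im_sum, u, v, Finset.sum_add_distrib,
      add_comm] using
      congrArg (fun w => (w i).im) hMz
  have hsym : u ⬝ᵥ (matIm M *ᵥ v) = v ⬝ᵥ (matIm M *ᵥ u) := by
    rw [dotProduct_mulVec, ← mulVec_transpose, hIm, dotProduct_comm]
  have key : u ⬝ᵥ (matRe M *ᵥ u) + v ⬝ᵥ (matRe M *ᵥ v) = μ.re * (u ⬝ᵥ u + v ⬝ᵥ v) := by
    have hu := congrArg (u ⬝ᵥ ·) hre
    have hv := congrArg (v ⬝ᵥ ·) him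
    simp only [dotProduct_sub, dotProduct_add, dotProduct_smul, smul_eq_mul] at hu hv
    rw [dotProduct_comm v u] at hv
    linarith
  have hquad : ∀ w, 0 ≤ w ⬝ᵥ (matRe M *ᵥ w) := fun w => by
    simpa using hRe.posSemidef.dotProduct_mulVec_nonneg w
  have hpos : 0 < u ⬝ᵥ (matRe M *ᵥ u) + v ⬝ᵥ (matRe M *ᵥ v) := by
    by_cases hu : u = 0
    · have hv : v ≠ 0 := fun hv =>
        hz (funext fun i => Complex.ext (congrFun hu i) (congrFun hv i))
      exact add_pos_of_nonneg_of_pos (hquad u) (by simpa using hRe.dotProduct_mulVec_pos hv)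
    · exact add_pos_of_pos_of_nonneg (by simpa using hRe.dotProduct_mulVec_pos hu) (hquad v)
  rw [key] at hpos
  exact pos_of_mul_pos_left hpos (add_nonneg (by simpa using dotProduct_star_self_nonneg u)
    (by simpa using dotProduct_star_self_nonneg v))

theorem re_ne_zero_of_mem_spectrum_ofReIm {H K : Matrix (Fin n) (Fin n) ℝ} (hH : Hᵀ = H)
    (hK : Kᵀ = K) (hHK : (H * H - K * K).PosDef) {t : ℝ} (ht : t ^ 2 ≤ 1) {μ : ℂ}
    (hμ : μ ∈ spectrum ℂ (ofReIm H (t • K))) : μ.re ≠ 0 := by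
  set A := ofReIm H (t • K)
  have hRe : matRe (A * A) = (H * H - K * K) + (1 - t ^ 2) • (K * K) := by
    rw [matRe_mul, matRe_ofReIm, matIm_ofReIm, smul_mul_smul_comm]
    module
  have hKK : (K * K).PosSemidef := by
    simpa [conjTranspose_eq_transpose_of_trivial, hK] using posSemidef_conjTranspose_mul_self K
  have hIm : (matIm (A * A))ᵀ = matIm (A * A) := by
    rw [matIm_mul, matRe_ofReIm, matIm_ofReIm, transpose_add, transpose_mul, transpose_mul,
      transpose_smul, hH, hK, add_comm]
  have hsq : 0 < (μ ^ 2).re :=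
    re_pos_of_mem_spectrum_of_posDef_matRe
      (hRe ▸ hHK.add_posSemidef (hKK.smul (by linarith))) hIm
      (by simpa [sq] using spectrum.pow_mem_pow A 2 hμ)
  intro h0
  rw [sq, Complex.mul_re, h0] at hsq
  nlinarith [sq_nonneg μ.im]

end RealImaginaryParts

theorem stmt_11_general {n : ℕ} (δ : ℝ) (hδ0 : 0 < δ)
    (B : Matrix (Fin n) (Fin n) ℂ)
    (h1 : (δ • matRe B - matIm B).PosDef) (h2 : (δ • matRe B + matIm B).PosDef)
    (S : Matrix (Fin n) (Fin n) ℂ) (hS : Sᵀ = S) (hSB : S * S = B)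
    (hspec : ∀ μ : ℂ, (S - μ • 1).det = 0 → 0 < μ.re) :
    (matRe S).PosDef := by
  subst hSB
  have hReB : (matRe S * matRe S - matIm S * matIm S).PosDef :=
    matRe_mul S S ▸ Matrix.PosDef.of_smul_sub_of_smul_add hδ0 h1 h2
  have hH : (matRe S)ᵀ = matRe S := by rw [← matRe_transpose, hS]
  have hK : (matIm S)ᵀ = matIm S := by rw [← matIm_transpose, hS]
  have h_one : spectrum ℂ (ofReIm (matRe S) ((1 : ℝ) • matIm S)) ⊆ {μ | 0 < μ.re} := by
    simpa [Matrix.mem_spectrum_iff_det_sub_smul_one_eq_zero, Set.subset_def] using hspec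
  have h_zero := Matrix.spectrum_subset_re_pos_of_isPreconnected (continuous_ofReIm_smul _ _)
    isPreconnected_Icc
    (fun t ht _ hμ =>
      re_ne_zero_of_mem_spectrum_ofReIm hH hK hReB (by nlinarith [ht.1, ht.2]) hμ)
    (Set.right_mem_Icc.2 zero_le_one) h_one (Set.left_mem_Icc.2 zero_le_one)
  refine Matrix.IsHermitian.posDef_of_spectrum_map_ofReal_subset ?_ ?_
  · simpa [Matrix.IsHermitian, Matrix.conjTranspose_eq_transpose_of_trivial] using hH
  · simpa [ofReIm_zero_right] using h_zero

/-- Let `n ≥ 1` and `δ > 0` with `2nδ < 1`.  Let `B` be a complex symmetric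
`n×n` matrix whose real and imaginary parts `B₀`, `B₁` satisfy: `δB₀ − B₁` and `δB₀ + B₁` are
positive definite.  Let `S` be a complex symmetric matrix with `S² = B` all of whose
eigenvalues have positive real part.  Then `Re S` is positive definite. -/
theorem stmt_11 {n : ℕ} (hn : 1 ≤ n) (δ : ℝ) (hδ0 : 0 < δ) (hδ : 2 * n * δ < 1)
    (B : Matrix (Fin n) (Fin n) ℂ) (hB : Bᵀ = B)
    (h1 : (δ • matRe B - matIm B).PosDef) (h2 : (δ • matRe B + matIm B).PosDef)
    (S : Matrix (Fin n) (Fin n) ℂ) (hS : Sᵀ = S) (hSB : S * S = B)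
    (hspec : ∀ μ : ℂ, (S - μ • 1).det = 0 → 0 < μ.re) :
    (matRe S).PosDef :=
  stmt_11_general δ hδ0 B h1 h2 S hS hSB hspec
end

section
/- Let Λ = diag(λ₁,…,λ_n) be a real diagonal matrix with all λ_j > 0, and let A = (a_{ij}) be a real symmetric n×n matrix such that both Λ² − (ΛA + AΛ) and Λ² + (ΛA + AΛ) are positive definite. Then |a_{ij}| < 2·min(λ_i, λ_j) for all indices i, j. -/
/-!
Write `S = ΛA + AΛ`. Evaluating `Λ² − S` at `a + b` and `Λ² + S` at `a − b` and adding gives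
`aᵀ S b + bᵀ S a < aᵀ Λ² a + bᵀ Λ² b` for every `a ≠ 0`. For `a = λ_j e_i`, `b = λ_i e_j` this
reads `(λ_i + λ_j) a_ij < λ_i λ_j`, and the same holds for `−A`; so `|a_ij|` is less than
`λ_i λ_j / (λ_i + λ_j) ≤ min (λ_i, λ_j)`.
-/

open scoped Matrix

namespace Matrix

theorem dotProduct_mulVec_add_lt_of_posDef_sub_of_posDef_add {ι : Type*} [Fintype ι]
    {D S : Matrix ι ι ℝ} (hP : (D - S).PosDef) (hQ : (D + S).PosDef) {a : ι → ℝ} (ha : a ≠ 0)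
    (b : ι → ℝ) : a ⬝ᵥ S *ᵥ b + b ⬝ᵥ S *ᵥ a < a ⬝ᵥ D *ᵥ a + b ⬝ᵥ D *ᵥ b := by
  have hP' : 0 ≤ (a + b) ⬝ᵥ (D - S) *ᵥ (a + b) := by
    simpa using hP.posSemidef.dotProduct_mulVec_nonneg (a + b)
  have hQ' : 0 ≤ (a - b) ⬝ᵥ (D + S) *ᵥ (a - b) := by
    simpa using hQ.posSemidef.dotProduct_mulVec_nonneg (a - b)
  have hpos : 0 < (a + b) ⬝ᵥ (D - S) *ᵥ (a + b) + (a - b) ⬝ᵥ (D + S) *ᵥ (a - b) := by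
    by_cases hab : a + b = 0
    · have hab' : a - b ≠ 0 := by
        rintro h
        rw [sub_eq_zero] at h
        subst h
        exact ha (by simpa [← two_smul ℝ] using hab)
      have := hQ.dotProduct_mulVec_pos hab'
      simp only [star_trivial] at this
      linarith
    · have := hP.dotProduct_mulVec_pos hab
      simp only [star_trivial] at this
      linarith
  have hexpand : (a + b) ⬝ᵥ (D - S) *ᵥ (a + b) + (a - b) ⬝ᵥ (D + S) *ᵥ (a - b)
      = 2 * (a ⬝ᵥ D *ᵥ a + b ⬝ᵥ D *ᵥ b - (a ⬝ᵥ S *ᵥ b + b ⬝ᵥ S *ᵥ a)) := by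
    simp only [sub_mulVec, add_mulVec, mulVec_add, mulVec_sub, dotProduct_add, dotProduct_sub,
      add_dotProduct, sub_dotProduct]
    ring
  linarith

theorem add_mul_apply_lt_mul_of_posDef {ι : Type*} [Fintype ι] [DecidableEq ι]
    {lam : ι → ℝ} {A : Matrix ι ι ℝ} (hA : A.IsSymm)
    (h1 : (diagonal lam * diagonal lam - (diagonal lam * A + A * diagonal lam)).PosDef)
    (h2 : (diagonal lam * diagonal lam + (diagonal lam * A + A * diagonal lam)).PosDef)
    {i j : ι} (hi : 0 < lam i) (hj : 0 < lam j) :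
    (lam i + lam j) * A i j < lam i * lam j := by
  have key := dotProduct_mulVec_add_lt_of_posDef_sub_of_posDef_add h1 h2
    (a := Pi.single i (lam j)) (by simpa using hj.ne') (Pi.single j (lam i))
  have hji : A j i = A i j := hA.apply i j
  simp only [mulVec_single, op_smul_eq_smul, dotProduct_smul, single_dotProduct, col_apply,
    add_apply, diagonal_mul, mul_diagonal, smul_eq_mul, hji, diagonal_mul_diagonal, col_diagonal,
    dotProduct_single, Pi.single_eq_same] at key
  have hscaled : 2 * (lam i * lam j) * ((lam i + lam j) * A i j)
      < 2 * (lam i * lam j) * (lam i * lam j) := by linarith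
  exact lt_of_mul_lt_mul_left hscaled (by positivity)

end Matrix

/-- Let `Λ = diag(λ₁,…,λ_n)` with all `λ_j > 0`, and let `A` be a real
symmetric matrix such that `Λ² − (ΛA + AΛ)` and `Λ² + (ΛA + AΛ)` are positive definite.  Then
`|a_{ij}| < 2·min(λ_i, λ_j)` for all `i, j`. -/
theorem stmt_13 {n : ℕ} (lam : Fin n → ℝ) (hlam : ∀ j, 0 < lam j)
    (A : Matrix (Fin n) (Fin n) ℝ) (hA : A.IsSymm)
    (h1 : (Matrix.diagonal lam * Matrix.diagonal lam -
        (Matrix.diagonal lam * A + A * Matrix.diagonal lam)).PosDef)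
    (h2 : (Matrix.diagonal lam * Matrix.diagonal lam +
        (Matrix.diagonal lam * A + A * Matrix.diagonal lam)).PosDef) :
    ∀ i j, |A i j| < 2 * min (lam i) (lam j) := by
  intro i j
  have upper := Matrix.add_mul_apply_lt_mul_of_posDef hA h1 h2 (hlam i) (hlam j)
  have lower := Matrix.add_mul_apply_lt_mul_of_posDef (A := -A) hA.neg
    (by rwa [Matrix.mul_neg, Matrix.neg_mul, ← neg_add, sub_neg_eq_add])
    (by rwa [Matrix.mul_neg, Matrix.neg_mul, ← neg_add, ← sub_eq_add_neg]) (hlam i) (hlam j)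
  have hprod : lam i * lam j ≤ (lam i + lam j) * min (lam i) (lam j) := by
    rw [← min_mul_max (lam i) (lam j), mul_comm (lam i + lam j)]
    gcongr
    · exact le_min (hlam i).le (hlam j).le
    · exact max_le_add_of_nonneg (hlam i).le (hlam j).le
  have hsum : 0 ≤ lam i + lam j := (add_pos (hlam i) (hlam j)).le
  have habs : |A i j| < min (lam i) (lam j) := abs_lt.mpr
    ⟨neg_lt.mp (lt_of_mul_lt_mul_left (by simpa using lower.trans_le hprod) hsum),
      lt_of_mul_lt_mul_left (upper.trans_le hprod) hsum⟩
  linarith [le_min (hlam i).le (hlam j).le]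
end

section
/- Let Σ⁺ = {z ∈ Sym(n,ℂ) : Re z is positive definite} and let GL(n,ℝ) act on Σ⁺ by g·z = g z gᵀ. Then this action is proper: the map GL(n,ℝ) × Σ⁺ → Σ⁺ × Σ⁺ given by (g,z) ↦ (g z gᵀ, z) is a proper map, i.e. the preimage of every compact subset of Σ⁺ × Σ⁺ is compact. -/
/-!
Since `Re (g z gᵀ) = g (Re z) gᵀ` for real `g`, everything reduces to real positive definite
matrices. On a compact set of pairs in `Σ⁺ × Σ⁺`, the matrices `P = Re z` satisfy a uniform
bound `vᵀ P v ≥ ε ‖v‖²`, while the diagonal entries of `g P gᵀ` stay bounded. The `i`-th diagonal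
entry is `gᵢ P gᵢᵀ ≥ ε ‖gᵢ‖²` for the `i`-th row `gᵢ` of `g`, so `g` is bounded. Hence the
preimage is closed and bounded in `M_n(ℝ) × M_n(ℂ)`, and it lies in `GL(n,ℝ) × Σ⁺` because
`g P gᵀ` positive definite forces `det g ≠ 0`.
-/

open scoped Matrix

open Matrix Set Topology

section RealMatrices

variable {ι : Type*} [Fintype ι]

lemma smul_dotProduct_mulVec_smul (P : Matrix ι ι ℝ) (c : ℝ) (v : ι → ℝ) :
    c • v ⬝ᵥ P *ᵥ (c • v) = c ^ 2 * (v ⬝ᵥ P *ᵥ v) := by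
  simp only [mulVec_smul, smul_dotProduct, dotProduct_smul, smul_eq_mul]
  ring

lemma exists_pos_mul_norm_sq_le_dotProduct_mulVec {Ps : Set (Matrix ι ι ℝ)} (hPs : IsCompact Ps)
    (hpd : ∀ P ∈ Ps, P.PosDef) :
    ∃ ε > 0, ∀ P ∈ Ps, ∀ v : ι → ℝ, ε * ‖v‖ ^ 2 ≤ v ⬝ᵥ P *ᵥ v := by
  have hcont : Continuous fun p : Matrix ι ι ℝ × (ι → ℝ) => p.2 ⬝ᵥ p.1 *ᵥ p.2 :=
    continuous_snd.dotProduct (continuous_fst.matrix_mulVec continuous_snd)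
  obtain ⟨ε, hε, hmin⟩ := (hPs.prod (isCompact_sphere (0 : ι → ℝ) 1)).exists_forall_le'
    hcont.continuousOn (a := 0) fun p hp =>
      (hpd p.1 hp.1).dotProduct_mulVec_pos (ne_zero_of_mem_unit_sphere ⟨p.2, hp.2⟩)
  refine ⟨ε, hε, fun P hP v => ?_⟩
  rcases eq_or_ne v 0 with rfl | hv
  · simp
  have hv' : ‖v‖ ≠ 0 := norm_ne_zero_iff.mpr hv
  have hu : ‖v‖⁻¹ • v ∈ Metric.sphere (0 : ι → ℝ) 1 := by
    simp [norm_smul, hv']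
  have h := hmin (P, ‖v‖⁻¹ • v) ⟨hP, hu⟩
  have hscale : v = ‖v‖ • ‖v‖⁻¹ • v := by
    rw [smul_smul, mul_inv_cancel₀ hv', one_smul]
  calc ε * ‖v‖ ^ 2 ≤ ‖v‖ ^ 2 * (‖v‖⁻¹ • v ⬝ᵥ P *ᵥ (‖v‖⁻¹ • v)) := by
        rw [mul_comm]; gcongr
    _ = v ⬝ᵥ P *ᵥ v := by rw [← smul_dotProduct_mulVec_smul, ← hscale]

lemma isUnit_of_posDef_mul_mul_transpose [DecidableEq ι] {g P : Matrix ι ι ℝ}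
    (h : (g * P * gᵀ).PosDef) : IsUnit g := by
  rw [isUnit_iff_isUnit_det, isUnit_iff_ne_zero]
  intro hg
  simpa [hg] using h.det_pos

lemma exists_norm_row_le_of_mul_mul_transpose_mem {Ps Qs : Set (Matrix ι ι ℝ)}
    (hPs : IsCompact Ps) (hpd : ∀ P ∈ Ps, P.PosDef) (hQs : IsCompact Qs) :
    ∃ R, ∀ g P, P ∈ Ps → g * P * gᵀ ∈ Qs → ∀ i, ‖g i‖ ≤ R := by
  obtain ⟨ε, hε, hεP⟩ := exists_pos_mul_norm_sq_le_dotProduct_mulVec hPs hpd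
  obtain ⟨M, hM⟩ := (hQs.image continuous_id.matrix_diag).isBounded.exists_norm_le
  refine ⟨Real.sqrt (M / ε), fun g P hP hQ i => Real.le_sqrt_of_sq_le ?_⟩
  have hdiag : (g * P * gᵀ) i i ≤ M :=
    (le_abs_self _).trans ((norm_le_pi_norm (g * P * gᵀ).diag i).trans (hM _ ⟨_, hQ, rfl⟩))
  rw [mul_mul_apply, transpose_transpose] at hdiag
  rw [le_div_iff₀ hε]
  linarith [hεP P hP (g i)]

end RealMatrices

lemma matRe_map_ofReal_mul_mul_transpose {n : ℕ} (g : Matrix (Fin n) (Fin n) ℝ)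
    (z : Matrix (Fin n) (Fin n) ℂ) :
    matRe (g.map Complex.ofReal * z * (g.map Complex.ofReal)ᵀ) = g * matRe z * gᵀ := by
  ext i j
  simp only [matRe, map_apply, mul_apply, transpose_apply, Complex.re_sum]
  refine Finset.sum_congr rfl fun k _ => ?_
  simp [Finset.sum_mul, Complex.re_sum, Complex.mul_re]

lemma continuous_matRe {n : ℕ} : Continuous (matRe (n := n)) :=
  continuous_id.matrix_map Complex.continuous_re

def conjPair {n : ℕ} (p : Matrix (Fin n) (Fin n) ℝ × Matrix (Fin n) (Fin n) ℂ) :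
    Matrix (Fin n) (Fin n) ℂ × Matrix (Fin n) (Fin n) ℂ :=
  (p.1.map Complex.ofReal * p.2 * (p.1.map Complex.ofReal)ᵀ, p.2)

lemma continuous_conjPair {n : ℕ} : Continuous (conjPair (n := n)) := by
  have hg : Continuous fun p : Matrix (Fin n) (Fin n) ℝ × Matrix (Fin n) (Fin n) ℂ =>
      p.1.map Complex.ofReal := continuous_fst.matrix_map Complex.continuous_ofReal
  exact ((hg.matrix_mul continuous_snd).matrix_mul hg.matrix_transpose).prodMk continuous_snd

lemma isCompact_preimage_conjPair {n : ℕ}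
    {K : Set (Matrix (Fin n) (Fin n) ℂ × Matrix (Fin n) (Fin n) ℂ)} (hK : IsCompact K)
    (hpd : ∀ q ∈ K, (matRe q.2).PosDef) : IsCompact (conjPair ⁻¹' K) := by
  have hPs : ∀ P ∈ matRe '' (Prod.snd '' K), P.PosDef := by
    rintro _ ⟨_, ⟨q, hq, rfl⟩, rfl⟩
    exact hpd q hq
  obtain ⟨R, hR⟩ := exists_norm_row_le_of_mul_mul_transpose_mem
    ((hK.image continuous_snd).image continuous_matRe) hPs
    ((hK.image continuous_fst).image continuous_matRe)
  have hbox : IsCompact (univ.pi fun _ => Metric.closedBall (0 : Fin n → ℝ) R :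
      Set (Matrix (Fin n) (Fin n) ℝ)) :=
    isCompact_univ_pi fun _ => isCompact_closedBall _ _
  refine (hbox.prod (hK.image continuous_snd)).of_isClosed_subset
    (hK.isClosed.preimage continuous_conjPair) fun p hp => ⟨fun i _ => ?_, ⟨_, hp, rfl⟩⟩
  refine mem_closedBall_zero_iff.mpr (hR p.1 (matRe p.2) ⟨p.2, ⟨_, hp, rfl⟩, rfl⟩ ?_ i)
  exact ⟨_, ⟨_, hp, rfl⟩, matRe_map_ofReal_mul_mul_transpose p.1 p.2⟩

/-- Let `Σ⁺ = {z ∈ Sym(n,ℂ) : Re z positive definite}` and let `GL(n,ℝ)` act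
on `Σ⁺` by `g·z = g z gᵀ`.  The map `GL(n,ℝ) × Σ⁺ → Σ⁺ × Σ⁺`, `(g,z) ↦ (g z gᵀ, z)` is proper:
the preimage of every compact subset of `Σ⁺ × Σ⁺` is compact. -/
theorem stmt_18 (n : ℕ)
    (F : {g : Matrix (Fin n) (Fin n) ℝ // IsUnit g} ×
          {z : Matrix (Fin n) (Fin n) ℂ // zᵀ = z ∧ (matRe z).PosDef} →
      Matrix (Fin n) (Fin n) ℂ × Matrix (Fin n) (Fin n) ℂ)
    (hF : ∀ gz, F gz =
      ((gz.1 : Matrix (Fin n) (Fin n) ℝ).map Complex.ofReal * (gz.2 : Matrix (Fin n) (Fin n) ℂ) *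
          ((gz.1 : Matrix (Fin n) (Fin n) ℝ).map Complex.ofReal)ᵀ,
        (gz.2 : Matrix (Fin n) (Fin n) ℂ))) :
    ∀ K : Set (Matrix (Fin n) (Fin n) ℂ × Matrix (Fin n) (Fin n) ℂ),
      IsCompact K →
      (∀ q ∈ K, (q.1ᵀ = q.1 ∧ (matRe q.1).PosDef) ∧ (q.2ᵀ = q.2 ∧ (matRe q.2).PosDef)) →
      IsCompact (F ⁻¹' K) := by
  intro K hK hKmem
  let incl := Prod.map (Subtype.val : {g : Matrix (Fin n) (Fin n) ℝ // IsUnit g} → _)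
    (Subtype.val : {z : Matrix (Fin n) (Fin n) ℂ // zᵀ = z ∧ (matRe z).PosDef} → _)
  have hF' : F = conjPair ∘ incl := funext hF
  have hrange : conjPair ⁻¹' K ⊆ range incl := by
    intro p hp
    have hconj : (p.1 * matRe p.2 * p.1ᵀ).PosDef := by
      rw [← matRe_map_ofReal_mul_mul_transpose]; exact (hKmem _ hp).1.2
    exact ⟨(⟨p.1, isUnit_of_posDef_mul_mul_transpose hconj⟩, ⟨p.2, (hKmem _ hp).2⟩),
      rfl⟩
  rw [hF', preimage_comp]
  exact (IsInducing.subtypeVal.prodMap IsInducing.subtypeVal).isCompact_preimage'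
    (isCompact_preimage_conjPair hK fun q hq => (hKmem q hq).2.2) hrange
end

section
/- Let Λ = diag(λ₁,…,λ_n) be a real diagonal matrix with all λ_j > 0, and let K be a complex n×n matrix with operator norm ‖K‖ < 1. Then for every eigenvalue λ of the matrix Λ^{1/2}(I + iK)Λ^{1/2} (where Λ^{1/2} = diag(√λ₁,…,√λ_n)), there exists an index j with |1 − λ/λ_j| ≤ ‖K‖. In particular, each eigenvalue λ lies in the open sector of the complex plane spanned from the origin by the disc {w : |w − 1| ≤ ‖K‖}. -/
/-!
Conjugating by `Λ^{1/2}` turns `det (M - μ I) = 0` into the singularity of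
`diag (1 - μ/λ_j) + i K`. A diagonal matrix `D` whose entries all exceed `‖A‖` in modulus stays
invertible after adding `A`, because `D + A = D (1 + D⁻¹ A)` with `‖D⁻¹ A‖ < 1` (Neumann series).
Hence some `|1 - μ/λ_j| ≤ ‖i K‖ = ‖K‖`, and `t = 1/λ_j` witnesses the sector claim.
-/

open scoped Matrix.Norms.L2Operator Matrix

namespace Matrix

variable {𝕜 m : Type*} [Fintype m] [DecidableEq m]

theorem isUnit_diagonal_add_of_l2_opNorm_lt [RCLike 𝕜] {d : m → 𝕜} {A : Matrix m m 𝕜}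
    (h : ∀ j, ‖A‖ < ‖d j‖) : IsUnit (diagonal d + A) := by
  have hd : ∀ j, d j ≠ 0 := fun j => norm_pos_iff.1 ((norm_nonneg A).trans_lt (h j))
  have hfactor : diagonal d + A = diagonal d * (1 - -(diagonal d⁻¹ * A)) := by
    rw [sub_neg_eq_add, mul_add, mul_one, ← mul_assoc, diagonal_mul_diagonal]
    simp only [Pi.inv_apply, mul_inv_cancel₀ (hd _), diagonal_one, one_mul]
  have hsmall : ‖-(diagonal d⁻¹ * A)‖ < 1 := by
    rw [norm_neg]
    refine (l2_opNorm_mul _ _).trans_lt ?_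
    rw [l2_opNorm_diagonal]
    rcases (norm_nonneg A).eq_or_lt with hA | hA
    · rw [← hA, mul_zero]
      exact one_pos
    rw [← lt_div_iff₀ hA, pi_norm_lt_iff (by positivity)]
    intro j
    rw [Pi.inv_apply, norm_inv, one_div]
    exact inv_strictAnti₀ hA (h j)
  rw [hfactor]
  exact (isUnit_diagonal.2 <| Pi.isUnit_iff.2 fun j => (hd j).isUnit).mul
    (isUnit_one_sub_of_norm_lt_one hsmall)

theorem exists_norm_le_l2_opNorm_of_det_diagonal_add_eq_zero [RCLike 𝕜] {d : m → 𝕜}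
    {A : Matrix m m 𝕜} (h : (diagonal d + A).det = 0) : ∃ j, ‖d j‖ ≤ ‖A‖ := by
  by_contra! hlt
  exact (isUnit_iff_isUnit_det _).1 (isUnit_diagonal_add_of_l2_opNorm_lt hlt) |>.ne_zero h

theorem diagonal_mul_mul_diagonal_sub_smul_one [Field 𝕜] {s : m → 𝕜} (hs : ∀ j, s j ≠ 0)
    (A : Matrix m m 𝕜) (μ : 𝕜) :
    diagonal s * A * diagonal s - μ • 1 =
      diagonal s * (A - diagonal fun j => μ / (s j * s j)) * diagonal s := by
  rw [mul_sub, sub_mul, diagonal_mul_diagonal, diagonal_mul_diagonal, smul_one_eq_diagonal]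
  congr 2
  ext j
  field_simp [hs j]

end Matrix

theorem stmt_19_general {n : ℕ} (lam : Fin n → ℝ) (hlam : ∀ j, 0 < lam j)
    (K : Matrix (Fin n) (Fin n) ℂ)
    (M : Matrix (Fin n) (Fin n) ℂ)
    (hM : M = (Matrix.diagonal fun j => (Real.sqrt (lam j) : ℂ)) * (1 + Complex.I • K) *
        (Matrix.diagonal fun j => (Real.sqrt (lam j) : ℂ)))
    (μ : ℂ) (hμ : (M - μ • 1).det = 0) :
    (∃ j, ‖1 - μ / (lam j : ℂ)‖ ≤ ‖K‖) ∧
    ∃ t : ℝ, 0 < t ∧ ‖(t : ℂ) * μ - 1‖ ≤ ‖K‖ := by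
  have hsqrt : ∀ j, (Real.sqrt (lam j) : ℂ) ≠ 0 := fun j =>
    Complex.ofReal_ne_zero.2 (Real.sqrt_pos.2 (hlam j)).ne'
  have hsq : ∀ j, (Real.sqrt (lam j) : ℂ) * Real.sqrt (lam j) = lam j := fun j => by
    rw [← Complex.ofReal_mul, Real.mul_self_sqrt (hlam j).le]
  have hshift : 1 + Complex.I • K - Matrix.diagonal (fun j => μ / lam j) =
      Matrix.diagonal (fun j => 1 - μ / lam j) + Complex.I • K := by
    rw [← Matrix.diagonal_one, ← sub_add_eq_add_sub, Matrix.diagonal_sub]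
  have hD : (Matrix.diagonal fun j => (Real.sqrt (lam j) : ℂ)).det ≠ 0 := by
    rw [Matrix.det_diagonal]
    exact Finset.prod_ne_zero_iff.2 fun j _ => hsqrt j
  have hdet : (Matrix.diagonal (fun j => 1 - μ / lam j) + Complex.I • K).det = 0 := by
    rw [hM, Matrix.diagonal_mul_mul_diagonal_sub_smul_one hsqrt] at hμ
    simpa only [hsq, hshift, Matrix.det_mul, mul_eq_zero, hD, or_false, false_or] using hμ
  obtain ⟨j, hj⟩ := Matrix.exists_norm_le_l2_opNorm_of_det_diagonal_add_eq_zero hdet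
  rw [norm_smul, Complex.norm_I, one_mul] at hj
  refine ⟨⟨j, hj⟩, (lam j)⁻¹, inv_pos.2 (hlam j), ?_⟩
  rwa [norm_sub_rev, Complex.ofReal_inv, inv_mul_eq_div]

/-- Let `Λ = diag(λ₁,…,λ_n)` with all `λ_j > 0`, and let `K` be a complex
matrix with operator norm `‖K‖ < 1`.  Then every eigenvalue `μ` of `Λ^{1/2}(I + iK)Λ^{1/2}`
satisfies `|1 − μ/λ_j| ≤ ‖K‖` for some index `j`; in particular, `μ` lies in the open sector
spanned from the origin by the disc `{w : |w − 1| ≤ ‖K‖}`. -/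
theorem stmt_19 {n : ℕ} (lam : Fin n → ℝ) (hlam : ∀ j, 0 < lam j)
    (K : Matrix (Fin n) (Fin n) ℂ) (hK : ‖K‖ < 1)
    (M : Matrix (Fin n) (Fin n) ℂ)
    (hM : M = (Matrix.diagonal fun j => (Real.sqrt (lam j) : ℂ)) * (1 + Complex.I • K) *
        (Matrix.diagonal fun j => (Real.sqrt (lam j) : ℂ)))
    (μ : ℂ) (hμ : (M - μ • 1).det = 0) :
    (∃ j, ‖1 - μ / (lam j : ℂ)‖ ≤ ‖K‖) ∧
    ∃ t : ℝ, 0 < t ∧ ‖(t : ℂ) * μ - 1‖ ≤ ‖K‖ :=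
  stmt_19_general lam hlam K M hM μ hμ
end
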